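/- Let G be a connected plane graph with minimum degree at least 3 that contains no cycle of length 4, no cycle of length 7, no cycle of length 9, and no 5-cycle normally adjacent to a 3-cycle. Then no 3-face of G is adjacent to a 6-face of G. -/

import Mathlib

namespace Paper

open SimpleGraph

variable {V : Type*}

/-- The fixed-point-free involution on darts reversing each dart. -/
def dartFlip (G : SimpleGraph V) : Equiv.Perm G.Dart :=
  ⟨SimpleGraph.Dart.symm, SimpleGraph.Dart.symm,
    fun d => SimpleGraph.Dart.symm_symm d, fun d => SimpleGraph.Dart.symm_symm d⟩

/-- A combinatorial embedding (rotation system) of a simple graph: a permutation of the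
darts whose cycles are exactly the sets of darts emanating from a common vertex. -/
structure PlaneEmbedding (G : SimpleGraph V) where
  rot : Equiv.Perm G.Dart
  fst_rot : ∀ d : G.Dart, (rot d).fst = d.fst
  rot_cyclic : ∀ d e : G.Dart, d.fst = e.fst → rot.SameCycle d e

/-- The face permutation of a combinatorial embedding; its orbits are the (boundary walks
of the) faces of the embedding. -/
def PlaneEmbedding.facePerm {G : SimpleGraph V} (E : PlaneEmbedding G) : Equiv.Perm G.Dart :=
  E.rot * dartFlip G

/-- The face (as its set of boundary darts, i.e. the orbit of the face permutation)
containing a given dart. -/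
def faceOf {G : SimpleGraph V} (E : PlaneEmbedding G) (d : G.Dart) : Set G.Dart :=
  {e | E.facePerm.SameCycle d e}

/-- The length of the boundary walk of the face containing a given dart; a `k`-face is a
face whose boundary walk has length `k`, i.e. whose dart-orbit has size `k`. -/
noncomputable def faceSize {G : SimpleGraph V} (E : PlaneEmbedding G) (d : G.Dart) : ℕ :=
  (faceOf E d).ncard

/-- The number of faces of the embedding lying in a given connected component. -/
noncomputable def componentFaceCount {G : SimpleGraph V} (E : PlaneEmbedding G)
    (c : G.ConnectedComponent) : ℕ :=
  Nat.card (Quotient (Setoid.comap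
    (Subtype.val : {d : G.Dart // G.connectedComponentMk d.fst = c} → G.Dart)
    (Equiv.Perm.SameCycle.setoid E.facePerm)))

/-- The embedding is plane (genus zero): Euler's formula `V - E + F = 2` holds on each
connected component containing an edge (stated as `2V + 2F = #darts + 4`, using that the
number of darts is twice the number of edges). -/
def PlaneEmbedding.IsPlane {G : SimpleGraph V} (E : PlaneEmbedding G) : Prop :=
  ∀ c : G.ConnectedComponent, (∃ d : G.Dart, G.connectedComponentMk d.fst = c) →
    2 * {v : V | G.connectedComponentMk v = c}.ncard + 2 * componentFaceCount E c
      = {d : G.Dart | G.connectedComponentMk d.fst = c}.ncard + 4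

/-- `G` is a planar graph: it admits a plane (genus-zero) combinatorial embedding. -/
def IsPlanar (G : SimpleGraph V) : Prop :=
  ∃ E : PlaneEmbedding G, E.IsPlane

/-- `G` has no cycle of length `n`. -/
def NoCycleLen (G : SimpleGraph V) (n : ℕ) : Prop :=
  ∀ (v : V) (c : G.Walk v v), c.IsCycle → c.length ≠ n

/-- Two cycles (given as closed walks) are normally adjacent: their intersection is
isomorphic to `K₂`, i.e. they share exactly one edge together with its two endpoints. -/
def NormAdjWalks (G : SimpleGraph V) {a b : V} (c₁ : G.Walk a a) (c₂ : G.Walk b b) : Prop :=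
  ∃ x y : V, x ≠ y ∧ s(x, y) ∈ c₁.edges ∧ s(x, y) ∈ c₂.edges ∧
    (∀ z : V, (z ∈ c₁.support ∧ z ∈ c₂.support) ↔ (z = x ∨ z = y))

/-- `G` has no `5`-cycle normally adjacent to a `3`-cycle. -/
def No5CycleNormAdj3 (G : SimpleGraph V) : Prop :=
  ∀ (a b : V) (c₁ : G.Walk a a) (c₂ : G.Walk b b),
    c₁.IsCycle → c₁.length = 5 → c₂.IsCycle → c₂.length = 3 →
      ¬ NormAdjWalks G c₁ c₂

/-- `d` lists the boundary darts of a face in order, and this boundary is the closed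
walk `v 0, v 1, …, v (n-1), v 0`. -/
def FaceTraversal {G : SimpleGraph V} (E : PlaneEmbedding G) {n : ℕ}
    (v : ZMod n → V) (d : ZMod n → G.Dart) : Prop :=
  (∀ i, (d i).toProd = (v i, v (i + 1))) ∧ ∀ i, E.facePerm (d i) = d (i + 1)

/-- The cycle `v 0, v 1, …, v (n-1), v 0` (with distinct vertices) bounds a face of the
embedding (traversed in one of the two possible directions). -/
def CycleBoundsFace {G : SimpleGraph V} (E : PlaneEmbedding G) {n : ℕ}
    (v : ZMod n → V) : Prop :=
  Function.Injective v ∧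
    ((∃ d, FaceTraversal E v d) ∨ (∃ d, FaceTraversal E (fun i => v (-i)) d))

/-- The `i`-th vertex of the boundary walk of the face containing the dart `d0`. -/
def boundaryVert {G : SimpleGraph V} (E : PlaneEmbedding G) (d0 : G.Dart) (i : ℕ) : V :=
  ((E.facePerm ^ i) d0).fst

/-- The faces containing the darts `d1`, `d2` are adjacent: their boundaries share at
least one edge. -/
def FacesAdjacent {G : SimpleGraph V} (E : PlaneEmbedding G) (d1 d2 : G.Dart) : Prop :=
  ∃ e1 e2 : G.Dart, E.facePerm.SameCycle d1 e1 ∧ E.facePerm.SameCycle d2 e2 ∧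
    e1.edge = e2.edge

/-- The set of vertices on the boundary of the face containing the dart `d`. -/
def faceVerts {G : SimpleGraph V} (E : PlaneEmbedding G) (d : G.Dart) : Set V :=
  {x | ∃ e : G.Dart, E.facePerm.SameCycle d e ∧ e.fst = x}

/-- The set of edges on the boundary of the face containing the dart `d`. -/
def faceEdges {G : SimpleGraph V} (E : PlaneEmbedding G) (d : G.Dart) : Set (Sym2 V) :=
  {s | ∃ e : G.Dart, E.facePerm.SameCycle d e ∧ e.edge = s}

section Configs

variable [Fintype V]

/-- Configuration (1): a `10`-cycle bounding a face together with a `3`-cycle bounding a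
face, normally adjacent to it along one edge, all eleven vertices having degree `3`. -/
def Config1 (G : SimpleGraph V) [DecidableRel G.Adj] (E : PlaneEmbedding G) : Prop :=
  ∃ (v : ZMod 10 → V) (w : ZMod 3 → V) (u : V),
    CycleBoundsFace E v ∧ CycleBoundsFace E w ∧
    ({w 0, w 1, w 2} : Set V) = {v 0, v 1, u} ∧ u ∉ Set.range v ∧
    (∀ i, G.degree (v i) = 3) ∧ G.degree u = 3

/-- Configuration (2): two vertex-disjoint `10`-cycles `x₁…x₁₀` and `y₁…y₁₀` (indexed here
from `0`), each bounding a face, with edges `x₃y₃` and `x₁₀y₁₀`; all `xᵢ` have degree `3`,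
`y₃` and `y₁₀` have degree `4`, the other `yᵢ` have degree `3`. -/
def Config2 (G : SimpleGraph V) [DecidableRel G.Adj] (E : PlaneEmbedding G) : Prop :=
  ∃ x y : ZMod 10 → V,
    CycleBoundsFace E x ∧ CycleBoundsFace E y ∧
    Set.range x ∩ Set.range y = ∅ ∧
    G.Adj (x 2) (y 2) ∧ G.Adj (x 9) (y 9) ∧
    (∀ i, G.degree (x i) = 3) ∧
    G.degree (y 2) = 4 ∧ G.degree (y 9) = 4 ∧
    (∀ i, i ≠ 2 → i ≠ 9 → G.degree (y i) = 3)

/-- Configuration (3): an `8`-cycle bounding a face and a `5`-cycle bounding a face that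
are normally adjacent (sharing exactly one edge and its endpoints), all eleven vertices
having degree `3`. -/
def Config3 (G : SimpleGraph V) [DecidableRel G.Adj] (E : PlaneEmbedding G) : Prop :=
  ∃ (a : ZMod 8 → V) (b : ZMod 5 → V),
    CycleBoundsFace E a ∧ CycleBoundsFace E b ∧
    Set.range a ∩ Set.range b = {a 0, a 1} ∧
    (∃ j : ZMod 5, (b j = a 0 ∧ b (j + 1) = a 1) ∨ (b j = a 1 ∧ b (j + 1) = a 0)) ∧
    (∀ i, G.degree (a i) = 3) ∧ (∀ j, G.degree (b j) = 3)

end Configs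

open Classical in
/-- The function resulting from the operation `Delete_[u](G, f)`: every neighbour of `u`
loses one unit. -/
noncomputable def deleteFun (G : SimpleGraph V) (u : V) (f : V → ℤ) : V → ℤ :=
  fun v => if G.Adj u v then f v - 1 else f v

open Classical in
/-- The function resulting from the operation `DeleteSave_[u; w](G, f)`: every neighbour
of `u` except `w` loses one unit. -/
noncomputable def deleteSaveFun (G : SimpleGraph V) (u w : V) (f : V → ℤ) : V → ℤ :=
  fun v => if G.Adj u v ∧ v ≠ w then f v - 1 else f v

/-- All vertices of the subgraph of `G` induced on `S` can be removed by a sequence of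
legal applications of the `Delete` and `DeleteSave` operations, starting from the value
function `f`. -/
inductive WeaklyReducible (G : SimpleGraph V) : Set V → (V → ℤ) → Prop
  | empty (f : V → ℤ) : WeaklyReducible G ∅ f
  | delete (S : Set V) (f : V → ℤ) (u : V) (hu : u ∈ S)
      (hnn : ∀ v ∈ S \ {u}, 0 ≤ deleteFun G u f v)
      (h : WeaklyReducible G (S \ {u}) (deleteFun G u f)) : WeaklyReducible G S f
  | deleteSave (S : Set V) (f : V → ℤ) (u w : V) (hu : u ∈ S) (hw : w ∈ S \ {u})
      (hadj : G.Adj u w) (hlt : f w < f u)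
      (hnn : ∀ v ∈ S \ {u}, 0 ≤ deleteSaveFun G u w f v)
      (h : WeaklyReducible G (S \ {u}) (deleteSaveFun G u w f)) : WeaklyReducible G S f

/-- `G` is weakly `d`-degenerate: all its vertices can be removed by a sequence of legal
applications of the `Delete` and `DeleteSave` operations, starting from the constant
function of value `d`. -/
def WeaklyDegenerate (G : SimpleGraph V) (d : ℤ) : Prop :=
  WeaklyReducible G Set.univ (fun _ => d)

/-- The canonical cover of `G` with `s = 2`: two disjoint copies of `G`, on vertex set
`V × Fin 2`, with `(u, i)` adjacent to `(v, j)` iff `uv ∈ E(G)` and `i = j`. -/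
def canonicalCover2 (G : SimpleGraph V) : SimpleGraph (V × Fin 2) where
  Adj a b := G.Adj a.1 b.1 ∧ a.2 = b.2
  symm := ⟨fun _ _ h => ⟨h.1.symm, h.2.symm⟩⟩
  loopless := ⟨fun a h => G.loopless.irrefl a.1 h.1⟩

/-- `T` is a strictly `f`-degenerate transversal-candidate set: every nonempty subgraph
`K` of the induced subgraph `H[T]` has a vertex `x` with `deg_K x < f x`. -/
def StrictlyFDegenerateOn {W : Type*} (H : SimpleGraph W) (f : W → ℕ) (T : Set W) : Prop :=
  ∀ K : H.Subgraph, K.verts ⊆ T → K.verts.Nonempty →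
    ∃ x ∈ K.verts, Nat.card (K.neighborSet x) < f x

end Paper

open SimpleGraph

/-!
Let the 3-face be bounded by the triangle `a → b → c` and let the 6-face be the face on the
other side of the edge `ab`, with boundary walk `b, a, p, q, r, s, b`. The face permutation
sends a dart `d` to `rot d.symm`, so if the walk backtracked, or if the two faces shared a
second edge at `a` or at `b` (that is, `p = c` or `s = c`), then `rot` would have an orbit
of size at most two at a vertex of degree at least three. A closed 6-walk without
backtracking either repeats a vertex, and then it closes a 4-cycle through `c`, or it is a
6-cycle, and then `c` closes a 4-cycle or a 7-cycle with it.
-/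

namespace Paper

variable {V : Type*} {G : SimpleGraph V}

namespace NoCycleLen

variable {n : ℕ}

theorem length_add_one_ne {u v : V} (hn : NoCycleLen G n) (p : G.Walk v u) (hp : p.IsPath)
    (huv : G.Adj u v) (hlen : 2 ≤ p.length) : p.length + 1 ≠ n :=
  hn u (.cons huv p)
    (Walk.isCycle_iff_isPath_tail_and_le_length.2 ⟨by simpa using hp, by simp; omega⟩)

theorem eq_or_eq_of_adj (h4 : NoCycleLen G 4) {a b c d : V}
    (hab : G.Adj a b) (hbc : G.Adj b c) (hcd : G.Adj c d) (hda : G.Adj d a) :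
    a = c ∨ b = d := by
  by_contra! h
  refine h4.length_add_one_ne (.cons hbc (.cons hcd (.cons hda .nil))) (.mk' ?_) hab
    (by simp) rfl
  simp [hbc.ne, hcd.ne, hda.ne, hab.ne.symm, h.1.symm, h.2]

theorem not_nodup_of_adj (h7 : NoCycleLen G 7) {a b c d e f g : V}
    (hab : G.Adj a b) (hbc : G.Adj b c) (hcd : G.Adj c d) (hde : G.Adj d e)
    (hef : G.Adj e f) (hfg : G.Adj f g) (hga : G.Adj g a) : ¬ [a, b, c, d, e, f, g].Nodup := by
  intro hnd
  refine h7.length_add_one_ne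
    (.cons hbc (.cons hcd (.cons hde (.cons hef (.cons hfg (.cons hga .nil)))))) (.mk' ?_) hab
    (by simp) rfl
  simpa using (List.nodup_rotate (n := 1)).2 hnd

end NoCycleLen

theorem eq_or_eq_of_triangle_of_hexagon (h4 : NoCycleLen G 4) (h7 : NoCycleLen G 7)
    {a b c p q r s : V} (hab : G.Adj a b) (hbc : G.Adj b c) (hca : G.Adj c a)
    (hap : G.Adj a p) (hpq : G.Adj p q) (hqr : G.Adj q r) (hrs : G.Adj r s) (hsb : G.Adj s b)
    (hbp : b ≠ p) (haq : a ≠ q) (hpr : p ≠ r) (hqs : q ≠ s) (hrb : r ≠ b) (hsa : s ≠ a) :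
    p = c ∨ s = c := by
  by_contra! hc
  obtain ⟨hpc, hsc⟩ := hc
  have hqb : q ≠ b := by
    rintro rfl
    rcases h4.eq_or_eq_of_adj hca hap hpq hbc with h | h
    exacts [hpc h.symm, hab.ne h]
  have hra : r ≠ a := by
    rintro rfl
    rcases h4.eq_or_eq_of_adj hbc.symm hsb.symm hrs.symm hca.symm with h | h
    exacts [hsc h.symm, hab.ne h.symm]
  have hps : p ≠ s := by
    rintro rfl
    rcases h4.eq_or_eq_of_adj hca hap hsb hbc with h | h
    exacts [hpc h.symm, hab.ne h]
  have hqc : q ≠ c := by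
    rintro rfl
    rcases h4.eq_or_eq_of_adj hab.symm hap hpq hbc.symm with h | h
    exacts [hbp h, hca.ne h.symm]
  have hrc : r ≠ c := by
    rintro rfl
    rcases h4.eq_or_eq_of_adj hca.symm hrs hsb hab.symm with h | h
    exacts [hsa h.symm, hbc.ne h.symm]
  refine h7.not_nodup_of_adj hap hpq hqr hrs hsb hbc hca ?_
  have := hap.ne; have := hpq.ne; have := hqr.ne; have := hrs.ne; have := hsb.ne
  have := hbc.ne; have := hca.ne; have := hab.ne
  simp only [List.nodup_cons, List.mem_cons, List.not_mem_nil, List.nodup_nil]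
  grind

namespace PlaneEmbedding

variable (E : PlaneEmbedding G)

theorem facePerm_apply (d : G.Dart) : E.facePerm d = E.rot d.symm := rfl

theorem fst_facePerm (d : G.Dart) : (E.facePerm d).fst = d.snd := E.fst_rot d.symm

theorem snd_facePerm_inv (d : G.Dart) : (E.facePerm⁻¹ d).snd = d.fst := by
  simpa using (E.fst_facePerm (E.facePerm⁻¹ d)).symm

theorem degree_le_two_of_rot_rot [Fintype V] [DecidableRel G.Adj] {d : G.Dart}
    (h : E.rot (E.rot d) = d) : G.degree d.fst ≤ 2 := by
  classical
  have horbit : ∀ k : ℕ, (E.rot ^ k) d = d ∨ (E.rot ^ k) d = E.rot d := by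
    intro k
    induction k with
    | zero => exact .inl rfl
    | succ k ih =>
      rw [pow_succ', Equiv.Perm.mul_apply]
      rcases ih with h' | h' <;> rw [h']
      exacts [.inr rfl, .inl h]
  have hsub : G.neighborFinset d.fst ⊆ {d.snd, (E.rot d).snd} := by
    intro x hx
    obtain ⟨k, hk⟩ := (E.rot_cyclic d ⟨(d.fst, x), (G.mem_neighborFinset _ _).1 hx⟩ rfl
      ).exists_nat_pow_eq
    rw [Finset.mem_insert, Finset.mem_singleton]
    rcases horbit k with h' | h' <;> rw [hk] at h'
    exacts [.inl (congrArg (·.snd) h'), .inr (congrArg (·.snd) h')]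
  calc G.degree d.fst = (G.neighborFinset d.fst).card := (G.card_neighborFinset_eq_degree _).symm
    _ ≤ ({d.snd, (E.rot d).snd} : Finset V).card := Finset.card_le_card hsub
    _ ≤ 2 := Finset.card_le_two

theorem snd_facePerm_symm_ne [Fintype V] [DecidableRel G.Adj] {d : G.Dart}
    (hdeg : 3 ≤ G.degree d.fst) : (E.facePerm d.symm).snd ≠ (E.facePerm⁻¹ d).fst := by
  intro h
  have hrot : E.rot d = (E.facePerm⁻¹ d).symm := by
    refine Dart.ext _ _ (Prod.ext ?_ h)
    rw [E.fst_rot, Dart.symm_toProd, Prod.fst_swap, snd_facePerm_inv]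
  have hrot' : E.rot (E.facePerm⁻¹ d).symm = d := by
    rw [← facePerm_apply]; simp
  have := E.degree_le_two_of_rot_rot (d := d) (by rw [hrot, hrot'])
  omega

theorem snd_facePerm_ne_fst [Fintype V] [DecidableRel G.Adj] {d : G.Dart}
    (hdeg : 3 ≤ G.degree d.snd) : (E.facePerm d).snd ≠ d.fst := by
  intro h
  have hrot : E.rot d.symm = d.symm := Dart.ext _ _ (Prod.ext (E.fst_facePerm d) h)
  have : G.degree d.snd ≤ 2 := E.degree_le_two_of_rot_rot (by rw [hrot, hrot])
  omega

end PlaneEmbedding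

theorem faceSize_eq_of_sameCycle {E : PlaneEmbedding G} {d e : G.Dart}
    (h : E.facePerm.SameCycle d e) : faceSize E d = faceSize E e := by
  have : faceOf E d = faceOf E e := Set.ext fun _ => ⟨h.symm.trans, h.trans⟩
  rw [faceSize, this, faceSize]

section Faces

variable (E : PlaneEmbedding G)

theorem boundaryVert_succ (d : G.Dart) (i : ℕ) :
    boundaryVert E d (i + 1) = ((E.facePerm ^ i) d).snd := by
  rw [boundaryVert, pow_succ', Equiv.Perm.mul_apply, PlaneEmbedding.fst_facePerm]

theorem adj_boundaryVert_succ (d : G.Dart) (i : ℕ) :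
    G.Adj (boundaryVert E d i) (boundaryVert E d (i + 1)) := by
  rw [boundaryVert_succ]
  exact ((E.facePerm ^ i) d).adj

variable [Fintype V] [DecidableRel G.Adj]

theorem faceSize_pos (d : G.Dart) : 0 < faceSize E d :=
  (Set.ncard_pos (Set.toFinite _)).2 ⟨d, Equiv.Perm.SameCycle.refl _ _⟩

theorem pow_faceSize_apply (d : G.Dart) : (E.facePerm ^ faceSize E d) d = d := by
  classical
  by_cases hd : E.facePerm d = d
  · exact Equiv.Perm.pow_apply_eq_self_of_apply_eq_self hd _
  · have : faceOf E d = (E.facePerm.cycleOf d).support := by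
      ext e
      rw [Finset.mem_coe, Equiv.Perm.mem_support_cycleOf_iff, Equiv.Perm.mem_support]
      exact (and_iff_left hd).symm
    rw [faceSize, this, Set.ncard_coe_finset,
      ← Equiv.Perm.pow_mod_card_support_cycleOf_self_apply, Nat.mod_self, pow_zero]
    rfl

theorem facePerm_inv_apply (d : G.Dart) :
    E.facePerm⁻¹ d = (E.facePerm ^ (faceSize E d - 1)) d := by
  rw [Equiv.Perm.inv_eq_iff_eq, ← Equiv.Perm.mul_apply, ← pow_succ',
    Nat.sub_add_cancel (faceSize_pos E d), pow_faceSize_apply E]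

theorem boundaryVert_add_faceSize (d : G.Dart) (i : ℕ) :
    boundaryVert E d (i + faceSize E d) = boundaryVert E d i := by
  rw [boundaryVert, pow_add, Equiv.Perm.mul_apply, pow_faceSize_apply E, boundaryVert]

theorem boundaryVert_ne_add_two (hmin : ∀ v, 3 ≤ G.degree v) (d : G.Dart) (i : ℕ) :
    boundaryVert E d i ≠ boundaryVert E d (i + 2) := by
  rw [boundaryVert_succ, pow_succ', Equiv.Perm.mul_apply]
  exact (E.snd_facePerm_ne_fst (hmin _)).symm

theorem boundaryVert_symm_two_ne {d : G.Dart} (hdeg : 3 ≤ G.degree d.fst) :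
    boundaryVert E d.symm 2 ≠ boundaryVert E d (faceSize E d - 1) := by
  rw [boundaryVert_succ, pow_one, boundaryVert, ← facePerm_inv_apply E]
  exact E.snd_facePerm_symm_ne hdeg

end Faces

end Paper

theorem statement17_general {V : Type*} [Fintype V] (G : SimpleGraph V) [DecidableRel G.Adj]
    (E : Paper.PlaneEmbedding G)
    (hmin : ∀ v : V, 3 ≤ G.degree v)
    (h4 : Paper.NoCycleLen G 4) (h7 : Paper.NoCycleLen G 7) :
    ∀ d1 d2 : G.Dart, Paper.faceSize E d1 = 3 → Paper.faceSize E d2 = 6 →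
      ¬ Paper.FacesAdjacent E d1 d2 := by
  rintro d1 d2 hs1 hs2 ⟨e, e', hd1, hd2, hedge⟩
  have h3 : Paper.faceSize E e = 3 := Paper.faceSize_eq_of_sameCycle hd1 ▸ hs1
  have h6 : Paper.faceSize E e' = 6 := Paper.faceSize_eq_of_sameCycle hd2 ▸ hs2
  obtain rfl : e' = e.symm := by
    rcases (dart_edge_eq_iff e e').1 hedge with rfl | rfl
    · omega
    · exact (Dart.symm_symm e').symm
  set x := Paper.boundaryVert E e
  set y := Paper.boundaryVert E e.symm
  have hx3 : x 3 = x 0 := by simpa [h3] using Paper.boundaryVert_add_faceSize E e 0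
  have hy6 (i : ℕ) : y (i + 6) = y i := h6 ▸ Paper.boundaryVert_add_faceSize E e.symm i
  have hy0 : y 0 = x 1 := (Paper.boundaryVert_succ E e 0).symm
  have hy1 : y 1 = x 0 := Paper.boundaryVert_succ E e.symm 0
  have hx := Paper.adj_boundaryVert_succ E e
  have hy := Paper.adj_boundaryVert_succ E e.symm
  have hny := Paper.boundaryVert_ne_add_two E hmin e.symm
  rcases Paper.eq_or_eq_of_triangle_of_hexagon h4 h7 (a := y 1) (b := y 0) (c := x 2) (p := y 2)
    (q := y 3) (r := y 4) (s := y 5) (hy 0).symm (by rw [hy0]; exact hx 1)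
    (by rw [hy1, ← hx3]; exact hx 2) (hy 1) (hy 2) (hy 3) (hy 4) (by rw [← hy6 0]; exact hy 5)
    (hny 0) (hny 1) (hny 2) (hny 3) (by rw [← hy6 0]; exact hny 4)
    (by rw [← hy6 1]; exact hny 5) with h | h
  · exact Paper.boundaryVert_symm_two_ne E (hmin e.fst) (by simpa [h3] using h)
  · exact Paper.boundaryVert_symm_two_ne E (d := e.symm) (hmin _) (by simpa [h6] using h.symm)

/-- No 3-face is adjacent to a 6-face. -/
theorem statement17 {V : Type*} [Fintype V] (G : SimpleGraph V) [DecidableRel G.Adj]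
    (hconn : G.Connected)
    (E : Paper.PlaneEmbedding G) (hE : E.IsPlane)
    (hmin : ∀ v : V, 3 ≤ G.degree v)
    (h4 : Paper.NoCycleLen G 4) (h7 : Paper.NoCycleLen G 7)
    (h9 : Paper.NoCycleLen G 9) (h53 : Paper.No5CycleNormAdj3 G) :
    ∀ d1 d2 : G.Dart, Paper.faceSize E d1 = 3 → Paper.faceSize E d2 = 6 →
      ¬ Paper.FacesAdjacent E d1 d2 :=
  statement17_general G E hmin h4 h7
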